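/- The fibers of the map w : ℂ² → ℝ³ are exactly the orbits of the diagonal circle action: if ζ = (ζ₁, ζ₂) and ζ' = (ζ'₁, ζ'₂) in ℂ² satisfy w(ζ) = w(ζ'), then there exists θ ∈ ℝ with ζ'₁ = e^{iθ}ζ₁ and ζ'₂ = e^{iθ}ζ₂. -/

import Mathlib

noncomputable section

/-- The map `w : ℂ² → ℝ³`, `w(ζ₁, ζ₂) = (½(|ζ₁|² − |ζ₂|²), Re(ζ₁ conj ζ₂), Im(ζ₁ conj ζ₂))`,
identifying the quotient of configuration space by rotations with (a cone over) the shape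
sphere. -/
def shapeMap (ζ : ℂ × ℂ) : ℝ × ℝ × ℝ :=
  ((1 / 2) * (‖ζ.1‖ ^ 2 - ‖ζ.2‖ ^ 2),
    (ζ.1 * starRingEnd ℂ ζ.2).re,
    (ζ.1 * starRingEnd ℂ ζ.2).im)

/-! The map `w` records `|ζ₁|² − |ζ₂|²` and `ζ₁ conj ζ₂`, hence also `|ζ₁||ζ₂|`; since
`(|ζ₁|² + |ζ₂|²)² = (|ζ₁|² − |ζ₂|²)² + 4|ζ₁|²|ζ₂|²`, it determines `|ζ₁|` and `|ζ₂|`.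
If `ζ₂ ≠ 0`, the unit `u = ζ'₂ / ζ₂` then also carries `ζ₁` to `ζ'₁`, because
`ζ'₁ conj u conj ζ₂ = ζ₁ conj ζ₂`; if `ζ₂ = 0`, only `|ζ₁| = |ζ'₁|` matters. -/

theorem eq_and_eq_of_sq_sub_sq_eq_of_mul_eq {a b c d : ℝ} (ha : 0 ≤ a) (hb : 0 ≤ b)
    (hc : 0 ≤ c) (hd : 0 ≤ d) (hsub : a ^ 2 - b ^ 2 = c ^ 2 - d ^ 2) (hmul : a * b = c * d) :
    a = c ∧ b = d := by
  have hsum : a ^ 2 + b ^ 2 = c ^ 2 + d ^ 2 := by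
    have : (a ^ 2 + b ^ 2) ^ 2 = (c ^ 2 + d ^ 2) ^ 2 := by
      calc (a ^ 2 + b ^ 2) ^ 2 = (a ^ 2 - b ^ 2) ^ 2 + 4 * (a * b) ^ 2 := by ring
        _ = (c ^ 2 - d ^ 2) ^ 2 + 4 * (c * d) ^ 2 := by rw [hsub, hmul]
        _ = (c ^ 2 + d ^ 2) ^ 2 := by ring
    exact (sq_eq_sq₀ (by positivity) (by positivity)).mp this
  exact ⟨(sq_eq_sq₀ ha hc).mp (by linarith), (sq_eq_sq₀ hb hd).mp (by linarith)⟩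

open ComplexConjugate

namespace RCLike

variable {K : Type*} [RCLike K]

theorem exists_norm_eq_one_eq_mul_of_norm_eq {a a' : K} (h : ‖a'‖ = ‖a‖) :
    ∃ u : K, ‖u‖ = 1 ∧ a' = u * a := by
  rcases eq_or_ne a 0 with rfl | ha
  · exact ⟨1, norm_one, by simpa using h⟩
  · refine ⟨a' / a, ?_, (div_mul_cancel₀ a' ha).symm⟩
    rw [norm_div, h, div_self (norm_ne_zero_iff.mpr ha)]

theorem exists_norm_eq_one_eq_mul_of_mul_conj_eq {a b a' b' : K} (ha : ‖a'‖ = ‖a‖)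
    (hb : ‖b'‖ = ‖b‖) (h : a' * conj b' = a * conj b) :
    ∃ u : K, ‖u‖ = 1 ∧ a' = u * a ∧ b' = u * b := by
  rcases eq_or_ne b 0 with rfl | hb0
  · obtain ⟨u, hu, rfl⟩ := exists_norm_eq_one_eq_mul_of_norm_eq ha
    exact ⟨u, hu, rfl, by simpa using hb⟩
  · obtain ⟨u, hu, rfl⟩ := exists_norm_eq_one_eq_mul_of_norm_eq hb
    have hconj : a' * conj u = a := by
      apply mul_right_cancel₀ ((map_ne_zero conj).mpr hb0)
      rw [← h, map_mul]; ring
    refine ⟨u, hu, ?_, rfl⟩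
    calc a' = u * conj u * a' := by rw [mul_conj, hu]; simp
      _ = u * a := by rw [← hconj]; ring

end RCLike

theorem mul_conj_eq_of_shapeMap_eq {ζ ζ' : ℂ × ℂ} (h : shapeMap ζ = shapeMap ζ') :
    ζ'.1 * starRingEnd ℂ ζ'.2 = ζ.1 * starRingEnd ℂ ζ.2 :=
  Complex.ext (congrArg (·.2.1) h).symm (congrArg (·.2.2) h).symm

theorem norm_eq_and_norm_eq_of_shapeMap_eq {ζ ζ' : ℂ × ℂ} (h : shapeMap ζ = shapeMap ζ') :
    ‖ζ'.1‖ = ‖ζ.1‖ ∧ ‖ζ'.2‖ = ‖ζ.2‖ := by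
  have hsub : ‖ζ'.1‖ ^ 2 - ‖ζ'.2‖ ^ 2 = ‖ζ.1‖ ^ 2 - ‖ζ.2‖ ^ 2 := by
    have := congrArg Prod.fst h
    simp only [shapeMap] at this
    linarith
  have hmul : ‖ζ'.1‖ * ‖ζ'.2‖ = ‖ζ.1‖ * ‖ζ.2‖ := by
    simpa using congrArg norm (mul_conj_eq_of_shapeMap_eq h)
  exact eq_and_eq_of_sq_sub_sq_eq_of_mul_eq (norm_nonneg _) (norm_nonneg _) (norm_nonneg _)
    (norm_nonneg _) hsub hmul

/-- The fibers of `w : ℂ² → ℝ³` are exactly the orbits of the diagonal circle action: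
if `w(ζ) = w(ζ')` then `ζ' = (e^{iθ}ζ₁, e^{iθ}ζ₂)` for some `θ ∈ ℝ`. -/
theorem shapeMap_fibers_are_circle_orbits
    (ζ ζ' : ℂ × ℂ) (h : shapeMap ζ = shapeMap ζ') :
    ∃ θ : ℝ, ζ'.1 = Complex.exp (θ * Complex.I) * ζ.1 ∧
      ζ'.2 = Complex.exp (θ * Complex.I) * ζ.2 := by
  obtain ⟨h₁, h₂⟩ := norm_eq_and_norm_eq_of_shapeMap_eq h
  obtain ⟨u, hu, hζ₁, hζ₂⟩ :=
    RCLike.exists_norm_eq_one_eq_mul_of_mul_conj_eq h₁ h₂ (mul_conj_eq_of_shapeMap_eq h)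
  obtain ⟨θ, rfl⟩ := (Complex.norm_eq_one_iff u).mp hu
  exact ⟨θ, hζ₁, hζ₂⟩
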